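/- Let 0 < s < ∞, Q/(Q+s) < p ≤ ∞, 0 < q ≤ ∞, and let Ψ: X → X satisfy B(Ψ(x)) ∩ B(x) ≠ ∅ for all x and ||Ψ(x)| − |x|| ≤ σ for some fixed σ ≥ 0. Then the composition operator u ↦ u∘Ψ is bounded on I^s_{p,q}(X). -/

import Mathlib

open MeasureTheory Metric Filter ENNReal NNReal

noncomputable section

/-- ℓ^p-type sum with weights, with the obvious modification (sup) when `p = ∞`. -/
def sumPartG {ι : Type*} (p : ℝ≥0∞) (w : ι → ℝ≥0∞) (f : ι → ℝ≥0∞) : ℝ≥0∞ :=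
  if p = ∞ then ⨆ i, f i else (∑' i, w i * f i ^ p.toReal) ^ (1 / p.toReal)

/-- The ball associated to a vertex `x` of the hyperbolic filling. -/
def vBall {Z X : Type*} [MetricSpace Z] (ξ : X → Z) (lvl : X → ℤ) (x : X) : Set Z :=
  Metric.ball (ξ x) ((2:ℝ) ^ (-(lvl x)))

/-- The sequence-space quasinorm of `I^s_{p,q}(X)`, for `g : X → ℝ≥0∞`. -/
def seqNorm {Z X : Type*} [MetricSpace Z] [MeasurableSpace Z] (μ : Measure Z)
    (ξ : X → Z) (lvl : X → ℤ) (s : ℝ) (p q : ℝ≥0∞) (g : X → ℝ≥0∞) : ℝ≥0∞ :=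
  sumPartG q (fun _ : ℤ => 1)
    (fun k => (2 : ℝ≥0∞) ^ ((k : ℝ) * s) *
      sumPartG p (fun x : {x : X // lvl x = k} => μ (vBall ξ lvl x.1)) (fun x => g x.1))

/-- The edge relation of the hyperbolic filling graph. -/
def edgeRel {Z X : Type*} [MetricSpace Z] (ξ : X → Z) (lvl : X → ℤ) (x y : X) : Prop :=
  x ≠ y ∧ |lvl x - lvl y| ≤ 1 ∧ (vBall ξ lvl x ∩ vBall ξ lvl y).Nonempty

/-- The magnitude `|du|` of the discrete derivative of `u : X → ℂ`. -/
def eDu {Z X : Type*} [MetricSpace Z] (ξ : X → Z) (lvl : X → ℤ) (u : X → ℂ) (x : X) : ℝ≥0∞ :=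
  (∑' y : {y : X // edgeRel ξ lvl x y}, (‖u y.1 - u x‖₊ : ℝ≥0∞) ^ (2:ℝ)) ^ ((1:ℝ)/2)

/-- The Poisson extension of `f`. -/
def poisson {Z X : Type*} [MetricSpace Z] [MeasurableSpace Z] (μ : Measure Z)
    (ξ : X → Z) (lvl : X → ℤ) (f : Z → ℂ) (x : X) : ℂ :=
  ⨍ z in vBall ξ lvl x, f z ∂μ

/-- The discrete convolution `T_n u = ∑_{|x| = n} u(x) ψ_x`. -/
def discConv {Z X : Type*} (lvl : X → ℤ) (ψ : X → Z → ℝ) (u : X → ℂ) (n : ℤ) (z : Z) : ℂ :=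
  ∑' x : {x : X // lvl x = n}, (ψ x.1 z : ℂ) * u x.1

/-!
Doubling makes `μ (B x)` and `μ (B (Ψ x))` comparable, and a packing argument shows that `Ψ`,
restricted to one level `k`, is boundedly-many-to-one into the levels `k - σ, …, k + σ`. Hence the
level-`k` ℓ^p-piece of `u ∘ Ψ` is controlled by the ℓ^p-pieces of `u` on those `2σ + 1` levels,
whose weights `2^{ks}` differ from `2^{(k+i)s}` by at most `2^{σs}`. Summing in ℓ^q, each shift of
the levels leaves the ℓ^q-norm unchanged.
-/

namespace ENNReal

open Finset

theorem finset_sum_rpow_le {ι : Type*} (F : Finset ι) (e : ι → ℝ≥0∞) {t : ℝ}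
    (ht : 0 < t) : (∑ i ∈ F, e i) ^ t ≤ (#F : ℝ≥0∞) ^ t * ∑ i ∈ F, e i ^ t := by
  have hterm : ∀ i ∈ F, e i ≤ (∑ j ∈ F, e j ^ t) ^ t⁻¹ := fun i hi => by
    calc e i = (e i ^ t) ^ t⁻¹ := (ENNReal.rpow_rpow_inv ht.ne' _).symm
      _ ≤ _ := by gcongr; exact single_le_sum (f := fun j => e j ^ t) (by simp) hi
  calc (∑ i ∈ F, e i) ^ t ≤ (#F • (∑ j ∈ F, e j ^ t) ^ t⁻¹) ^ t := by
        gcongr; exact sum_le_card_nsmul _ _ _ hterm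
    _ = _ := by
        rw [nsmul_eq_mul, ENNReal.mul_rpow_of_nonneg _ _ ht.le, ENNReal.rpow_inv_rpow ht.ne']

theorem tsum_comp_le_of_card_fiber_le {α β : Type*} (Φ : α → β) (h : β → ℝ≥0∞)
    {N : ℕ} (hΦ : ∀ b (T : Finset α), (∀ a ∈ T, Φ a = b) → #T ≤ N) :
    ∑' a, h (Φ a) ≤ N * ∑' b, h b := by
  classical
  rw [ENNReal.tsum_eq_iSup_sum]
  refine iSup_le fun T => ?_
  calc ∑ a ∈ T, h (Φ a) = ∑ b ∈ T.image Φ, #{a ∈ T | Φ a = b} • h b := sum_comp h Φ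
    _ ≤ ∑ b ∈ T.image Φ, N * h b := by
        gcongr with b
        rw [nsmul_eq_mul]
        gcongr
        exact_mod_cast hΦ b _ fun a ha => (mem_filter.mp ha).2
    _ ≤ N * ∑' b, h b := by rw [← mul_sum]; gcongr; exact ENNReal.sum_le_tsum _

end ENNReal

section sumPartG

open Finset

variable {ι κ : Type*} {p : ℝ≥0∞}

theorem sumPartG_mono (w : ι → ℝ≥0∞) {f g : ι → ℝ≥0∞} (hfg : f ≤ g) :
    sumPartG p w f ≤ sumPartG p w g := by
  unfold sumPartG
  split_ifs
  · exact iSup_mono hfg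
  · gcongr with i
    exact hfg i

theorem sumPartG_const_mul (hp : p ≠ 0) (w f : ι → ℝ≥0∞) (c : ℝ≥0∞) :
    sumPartG p w (fun i => c * f i) = c * sumPartG p w f := by
  unfold sumPartG
  split_ifs with hp'
  · exact (ENNReal.mul_iSup c f).symm
  · have hr : 0 < p.toReal := ENNReal.toReal_pos hp hp'
    simp_rw [ENNReal.mul_rpow_of_nonneg _ _ hr.le, mul_left_comm (w _), ENNReal.tsum_mul_left,
      ENNReal.mul_rpow_of_nonneg _ _ (one_div_nonneg.mpr hr.le), one_div,
      ENNReal.rpow_rpow_inv hr.ne']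

theorem sumPartG_comp_equiv (e : κ ≃ ι) (w f : ι → ℝ≥0∞) :
    sumPartG p (w ∘ e) (f ∘ e) = sumPartG p w f := by
  unfold sumPartG
  split_ifs
  · exact e.iSup_comp
  · rw [← e.tsum_eq]
    rfl

theorem sumPartG_finset_sum_le (hp : p ≠ 0) {γ : Type*} (F : Finset γ) (w : ι → ℝ≥0∞)
    (f : γ → ι → ℝ≥0∞) :
    sumPartG p w (fun k => ∑ i ∈ F, f i k) ≤
      #F * #F ^ (1 / p.toReal) * ∑ i ∈ F, sumPartG p w (f i) := by
  unfold sumPartG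
  split_ifs with hp'
  · refine iSup_le fun k => ?_
    calc ∑ i ∈ F, f i k ≤ ∑ i ∈ F, ⨆ k, f i k := by gcongr with i; exact le_iSup (f i) k
      _ ≤ #F * ∑ i ∈ F, ⨆ k, f i k := by
          rcases F.eq_empty_or_nonempty with rfl | hF
          · simp
          · exact le_mul_of_one_le_left' (by exact_mod_cast hF.card_pos)
      _ = _ := by simp [hp']
  set r := p.toReal
  have hr : 0 < r := ENNReal.toReal_pos hp hp'
  set T : γ → ℝ≥0∞ := fun i => ∑' k, w k * f i k ^ r
  have hsum : ∑' k, w k * (∑ i ∈ F, f i k) ^ r ≤ (#F : ℝ≥0∞) ^ r * ∑ i ∈ F, T i := by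
    calc ∑' k, w k * (∑ i ∈ F, f i k) ^ r
        ≤ ∑' k, (#F : ℝ≥0∞) ^ r * ∑ i ∈ F, w k * f i k ^ r := by
          refine ENNReal.tsum_le_tsum fun k => ?_
          rw [← mul_sum, mul_left_comm]
          gcongr
          exact ENNReal.finset_sum_rpow_le F _ hr
      _ = _ := by
          rw [ENNReal.tsum_mul_left, Summable.tsum_finsetSum fun i _ => ENNReal.summable]
  calc (∑' k, w k * (∑ i ∈ F, f i k) ^ r) ^ (1 / r)
      ≤ ((#F : ℝ≥0∞) ^ r * ∑ i ∈ F, T i) ^ (1 / r) := by gcongr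
    _ = #F * (∑ i ∈ F, T i) ^ (1 / r) := by
        rw [ENNReal.mul_rpow_of_nonneg _ _ (by positivity), one_div,
          ENNReal.rpow_rpow_inv hr.ne']
    _ ≤ #F * (#F ^ (1 / r) * ∑ i ∈ F, T i ^ (1 / r)) := by
        gcongr; exact ENNReal.finset_sum_rpow_le F T (by positivity)
    _ = _ := (mul_assoc _ _ _).symm

theorem sumPartG_sum_shift_le (hp : p ≠ 0) {G : Type*} [AddGroup G] (F : Finset G)
    (c : G → ℝ≥0∞) :
    sumPartG p (fun _ => 1) (fun k => ∑ i ∈ F, c (k + i)) ≤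
      #F * #F ^ (1 / p.toReal) * #F * sumPartG p (fun _ => 1) c := by
  have hshift : ∀ i, sumPartG p (fun _ => 1) (fun k => c (k + i)) = sumPartG p (fun _ => 1) c :=
    fun i => sumPartG_comp_equiv (Equiv.addRight i) (fun _ => 1) c
  calc _ ≤ #F * #F ^ (1 / p.toReal) * ∑ i ∈ F, sumPartG p (fun _ => 1) (fun k => c (k + i)) :=
        sumPartG_finset_sum_le hp F _ _
    _ = _ := by simp_rw [hshift, sum_const, nsmul_eq_mul, mul_assoc]

theorem sumPartG_comp_le (Φ : κ → ι) {w : κ → ℝ≥0∞} {w' : ι → ℝ≥0∞} (f : ι → ℝ≥0∞)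
    {K : ℝ≥0∞} {N : ℕ} (hw : ∀ a, w a ≤ K * w' (Φ a))
    (hΦ : ∀ b (T : Finset κ), (∀ a ∈ T, Φ a = b) → #T ≤ N) :
    sumPartG p w (f ∘ Φ) ≤ (K * N) ^ (1 / p.toReal) * sumPartG p w' f := by
  unfold sumPartG
  split_ifs with hp'
  · simpa [hp'] using fun a => le_iSup f (Φ a)
  set r := p.toReal
  calc (∑' a, w a * f (Φ a) ^ r) ^ (1 / r)
      ≤ (K * N * ∑' b, w' b * f b ^ r) ^ (1 / r) := by
        gcongr
        calc ∑' a, w a * f (Φ a) ^ r ≤ ∑' a, K * (w' (Φ a) * f (Φ a) ^ r) := by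
              refine ENNReal.tsum_le_tsum fun a => ?_
              rw [← mul_assoc]
              gcongr
              exact hw a
          _ ≤ K * (N * ∑' b, w' b * f b ^ r) := by
              rw [ENNReal.tsum_mul_left]
              gcongr
              exact ENNReal.tsum_comp_le_of_card_fiber_le Φ (fun b => w' b * f b ^ r) hΦ
          _ = _ := (mul_assoc _ _ _).symm
    _ = _ := ENNReal.mul_rpow_of_nonneg _ _ (by positivity)

theorem sumPartG_biUnion_le (hp : p ≠ 0) {γ : Type*} (F : Finset γ) (L : γ → Set ι)
    (w f : ι → ℝ≥0∞) :
    sumPartG p (fun y : ↥(⋃ i ∈ F, L i) => w y) (fun y => f y) ≤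
      #F ^ (1 / p.toReal) * ∑ i ∈ F, sumPartG p (fun y : L i => w y) (fun y => f y) := by
  unfold sumPartG
  split_ifs with hp'
  · refine iSup_le fun ⟨y, hy⟩ => ?_
    obtain ⟨i, hi, hyi⟩ := Set.mem_iUnion₂.mp hy
    calc f y ≤ ⨆ z : L i, f z := le_iSup (fun z : L i => f z) ⟨y, hyi⟩
      _ ≤ ∑ i ∈ F, ⨆ z : L i, f z :=
          single_le_sum (f := fun i => ⨆ z : L i, f z) (fun _ _ => zero_le) hi
      _ = _ := by simp [hp']
  set r := p.toReal
  have hr : 0 < r := ENNReal.toReal_pos hp hp'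
  calc (∑' y : ↥(⋃ i ∈ F, L i), w y * f y ^ r) ^ (1 / r)
      ≤ (∑ i ∈ F, ∑' y : L i, w y * f y ^ r) ^ (1 / r) := by
        gcongr
        exact ENNReal.tsum_biUnion_le (fun y => w y * f y ^ r) F L
    _ ≤ _ := ENNReal.finset_sum_rpow_le F _ (by positivity)

end sumPartG

section Doubling

open Finset

variable {Z : Type*} [PseudoMetricSpace Z] [MeasurableSpace Z]

def DoublingWith (μ : Measure Z) (C Q : ℝ) : Prop :=
  ∀ (ζ : Z) (r lam : ℝ), 0 < r → 1 ≤ lam →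
    μ (ball ζ (lam * r)) ≤ ENNReal.ofReal (C * lam ^ Q) * μ (ball ζ r)

variable {μ : Measure Z} {C Q : ℝ}

theorem DoublingWith.measure_ball_le (hμ : DoublingWith μ C Q) {a b : Z} {r t L : ℝ}
    (hab : (ball a r ∩ ball b t).Nonempty) (ht : 0 < t) (hL : 0 ≤ L) (hrt : r ≤ L * t) :
    μ (ball a r) ≤ ENNReal.ofReal (C * (2 * L + 1) ^ Q) * μ (ball b t) := by
  have hsub : ball a r ⊆ ball b ((2 * L + 1) * t) := by
    refine ball_subset_ball' ?_
    linarith [dist_lt_add_of_nonempty_ball_inter_ball hab]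
  exact (measure_mono hsub).trans (hμ b t _ ht (by linarith))

/-- Packing: the disjoint balls `ball (f i) δ` lie in `ball ζ ((L + 1) * δ)`, whose measure is at
most `C * (2 * (L + 1) + 1) ^ Q` times that of each of them. -/
theorem DoublingWith.card_le [OpensMeasurableSpace Z] (hμ : DoublingWith μ C Q)
    (hpos : ∀ (ζ : Z) (r : ℝ), 0 < r → 0 < μ (ball ζ r))
    (hfin : ∀ (ζ : Z) (r : ℝ), μ (ball ζ r) < ∞)
    {ι : Type*} (f : ι → Z) (T : Finset ι) (ζ : Z) {δ L : ℝ} (hδ : 0 < δ) (hL : 0 ≤ L)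
    (hsep : ∀ i ∈ T, ∀ j ∈ T, i ≠ j → 2 * δ ≤ dist (f i) (f j))
    (hnear : ∀ i ∈ T, dist (f i) ζ < L * δ) :
    #T ≤ ⌈C * (2 * (L + 1) + 1) ^ Q⌉₊ := by
  set K := ENNReal.ofReal (C * (2 * (L + 1) + 1) ^ Q)
  set R := (L + 1) * δ with hRdef
  have hR : 0 < R := by positivity
  have hcomp : ∀ i ∈ T, μ (ball ζ R) ≤ K * μ (ball (f i) δ) := fun i hi =>
    hμ.measure_ball_le ⟨f i, by rw [mem_ball]; linarith [hnear i hi], mem_ball_self hδ⟩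
      hδ (by linarith) le_rfl
  have hdisj : (T : Set ι).PairwiseDisjoint fun i => ball (f i) δ := fun i hi j hj hij =>
    ball_disjoint_ball (by linarith [hsep i hi j hj hij])
  have hunion : (⋃ i ∈ T, ball (f i) δ) ⊆ ball ζ R := Set.iUnion₂_subset fun i hi =>
    ball_subset_ball' (by linarith [hnear i hi])
  have hcount : (#T : ℝ≥0∞) * μ (ball ζ R) ≤ K * μ (ball ζ R) :=
    calc (#T : ℝ≥0∞) * μ (ball ζ R) = ∑ _i ∈ T, μ (ball ζ R) := by
          rw [sum_const, nsmul_eq_mul]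
      _ ≤ ∑ i ∈ T, K * μ (ball (f i) δ) := sum_le_sum hcomp
      _ = K * μ (⋃ i ∈ T, ball (f i) δ) := by
          rw [measure_biUnion_finset hdisj fun _ _ => measurableSet_ball, mul_sum]
      _ ≤ K * μ (ball ζ R) := by gcongr
  have hK : (#T : ℝ≥0∞) ≤ K :=
    (ENNReal.mul_le_mul_iff_left (hpos ζ R hR).ne' (hfin ζ R).ne).mp hcount
  exact_mod_cast hK.trans (ENNReal.ofReal_le_ofReal (Nat.le_ceil _) |>.trans_eq
    (ENNReal.ofReal_natCast _))

end Doubling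

theorem two_rpow_mul_sum_Icc_le {s : ℝ} (hs : 0 ≤ s) (σ k : ℤ) (a : ℤ → ℝ≥0∞) :
    (2 : ℝ≥0∞) ^ ((k : ℝ) * s) * ∑ i ∈ Finset.Icc (-σ) σ, a i ≤
      2 ^ ((σ : ℝ) * s) * ∑ i ∈ Finset.Icc (-σ) σ, 2 ^ (((k + i : ℤ) : ℝ) * s) * a i := by
  rw [Finset.mul_sum, Finset.mul_sum]
  refine Finset.sum_le_sum fun i hi => ?_
  rw [← mul_assoc, ← ENNReal.rpow_add _ _ two_ne_zero ENNReal.ofNat_ne_top]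
  refine mul_le_mul_left (ENNReal.rpow_le_rpow_of_exponent_le one_le_two ?_) _
  have hσi : (0 : ℤ) ≤ σ + i := by have := (Finset.mem_Icc.mp hi).1; omega
  have : (0 : ℝ) ≤ σ + i := by exact_mod_cast hσi
  push_cast
  nlinarith

section HyperbolicFilling

open Finset

variable {Z X : Type*} [MetricSpace Z] [MeasurableSpace Z] {μ : Measure Z} {C Q : ℝ}
  {ξ : X → Z} {lvl : X → ℤ}

def levelNorm (μ : Measure Z) (ξ : X → Z) (lvl : X → ℤ) (p : ℝ≥0∞) (g : X → ℝ≥0∞) (k : ℤ) :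
    ℝ≥0∞ :=
  sumPartG p (fun x : {x : X // lvl x = k} => μ (vBall ξ lvl x.1)) (fun x => g x.1)

theorem two_zpow_le_two_zpow_mul_two_zpow {a b σ : ℤ} (h : a ≤ σ + b) :
    (2 : ℝ) ^ a ≤ 2 ^ σ * 2 ^ b := by
  rw [← zpow_add₀ two_ne_zero]
  exact zpow_le_zpow_right₀ one_le_two h

theorem DoublingWith.measure_vBall_le (hμ : DoublingWith μ C Q) {x y : X} {σ : ℤ}
    (hxy : (vBall ξ lvl y ∩ vBall ξ lvl x).Nonempty) (hσ : lvl y - lvl x ≤ σ) :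
    μ (vBall ξ lvl x) ≤ ENNReal.ofReal (C * (2 * 2 ^ σ + 1) ^ Q) * μ (vBall ξ lvl y) :=
  hμ.measure_ball_le (Set.inter_comm _ _ ▸ hxy) (by positivity) (by positivity)
    (two_zpow_le_two_zpow_mul_two_zpow (by omega))

theorem DoublingWith.card_le_of_vBall_inter_nonempty [OpensMeasurableSpace Z]
    (hμ : DoublingWith μ C Q)
    (hpos : ∀ (ζ : Z) (r : ℝ), 0 < r → 0 < μ (ball ζ r))
    (hfin : ∀ (ζ : Z) (r : ℝ), μ (ball ζ r) < ∞)
    (hsep : ∀ x y : X, x ≠ y → lvl x = lvl y → (2:ℝ) ^ (-lvl x - 1) ≤ dist (ξ x) (ξ y))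
    {k σ : ℤ} (y : X) (hy : k - lvl y ≤ σ) (T : Finset {x : X // lvl x = k})
    (hT : ∀ x ∈ T, (vBall ξ lvl y ∩ vBall ξ lvl x.1).Nonempty) :
    #T ≤ ⌈C * (2 * (4 * (1 + 2 ^ σ) + 1) + 1) ^ Q⌉₊ := by
  refine hμ.card_le hpos hfin (fun x => ξ x.1) T (ξ y) (δ := 2 ^ (-k) / 4) (by positivity)
    (by positivity) (fun x _ x' _ hxx' => ?_) (fun x hx => ?_)
  · have h := hsep x.1 x'.1 (Subtype.coe_ne_coe.mpr hxx') (x.2.trans x'.2.symm)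
    rw [x.2, zpow_sub_one₀ two_ne_zero] at h
    linarith
  · have hd := dist_lt_add_of_nonempty_ball_inter_ball (Set.inter_comm _ _ ▸ hT x hx)
    have hy' : (2 : ℝ) ^ (-lvl y) ≤ 2 ^ σ * 2 ^ (-k) :=
      two_zpow_le_two_zpow_mul_two_zpow (by omega)
    rw [x.2] at hd
    linarith

theorem DoublingWith.exists_levelNorm_comp_le [OpensMeasurableSpace Z]
    (hμ : DoublingWith μ C Q)
    (hpos : ∀ (ζ : Z) (r : ℝ), 0 < r → 0 < μ (ball ζ r))
    (hfin : ∀ (ζ : Z) (r : ℝ), μ (ball ζ r) < ∞)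
    (hsep : ∀ x y : X, x ≠ y → lvl x = lvl y → (2:ℝ) ^ (-lvl x - 1) ≤ dist (ξ x) (ξ y))
    {p : ℝ≥0∞} (hp : p ≠ 0) {Ψ : X → X} {σ : ℤ}
    (hΨ1 : ∀ x, (vBall ξ lvl (Ψ x) ∩ vBall ξ lvl x).Nonempty)
    (hΨ2 : ∀ x, |lvl (Ψ x) - lvl x| ≤ σ) :
    ∃ M : ℝ≥0∞, M ≠ ∞ ∧ ∀ (g : X → ℝ≥0∞) (k : ℤ),
      levelNorm μ ξ lvl p (g ∘ Ψ) k ≤ M * ∑ i ∈ Icc (-σ) σ, levelNorm μ ξ lvl p g (k + i) := by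
  set F := Icc (-σ) σ
  set K := ENNReal.ofReal (C * (2 * 2 ^ σ + 1) ^ Q)
  set N := ⌈C * (2 * (4 * (1 + 2 ^ σ) + 1) + 1) ^ Q⌉₊
  refine ⟨(K * N) ^ (1 / p.toReal) * #F ^ (1 / p.toReal), by finiteness, fun g k => ?_⟩
  set band := ⋃ i ∈ F, {y : X | lvl y = k + i}
  have hband : ∀ x : {x : X // lvl x = k}, Ψ x.1 ∈ band := fun x => Set.mem_iUnion₂.mpr
    ⟨lvl (Ψ x.1) - k, mem_Icc.mpr (by have := abs_le.mp (hΨ2 x.1); omega), by simp⟩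
  set Φ : {x : X // lvl x = k} → band := fun x => ⟨Ψ x.1, hband x⟩
  have hw : ∀ x, μ (vBall ξ lvl x.1) ≤ K * μ (vBall ξ lvl (Φ x).1) := fun x =>
    hμ.measure_vBall_le (hΨ1 x.1) (abs_le.mp (hΨ2 x.1)).2
  have hΦ : ∀ y (T : Finset {x : X // lvl x = k}), (∀ x ∈ T, Φ x = y) → #T ≤ N := by
    intro y T hT
    obtain ⟨i, hi, hyi⟩ := Set.mem_iUnion₂.mp y.2
    refine hμ.card_le_of_vBall_inter_nonempty hpos hfin hsep y.1 ?_ T fun x hx => ?_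
    · have hyi : lvl y.1 = k + i := hyi
      have := (mem_Icc.mp hi).1
      omega
    · rw [← hT x hx]
      exact hΨ1 x.1
  calc levelNorm μ ξ lvl p (g ∘ Ψ) k
      = sumPartG p (fun x : {x : X // lvl x = k} => μ (vBall ξ lvl x.1))
          ((fun y : band => g y) ∘ Φ) := rfl
    _ ≤ (K * N) ^ (1 / p.toReal) *
          sumPartG p (fun y : band => μ (vBall ξ lvl y)) (fun y => g y) :=
        sumPartG_comp_le Φ _ hw hΦ
    _ ≤ (K * N) ^ (1 / p.toReal) *
          (#F ^ (1 / p.toReal) * ∑ i ∈ F, levelNorm μ ξ lvl p g (k + i)) := by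
        gcongr
        exact sumPartG_biUnion_le hp F _ (fun y => μ (vBall ξ lvl y)) g
    _ = _ := (mul_assoc _ _ _).symm

end HyperbolicFilling

theorem statement10_general {Z : Type*} [MetricSpace Z] [MeasurableSpace Z] [BorelSpace Z]
    (μ : Measure Z) (C Q : ℝ)
    (hdoub : ∀ (ζ : Z) (r lam : ℝ), 0 < r → 1 ≤ lam →
      μ (Metric.ball ζ (lam * r)) ≤ ENNReal.ofReal (C * lam ^ Q) * μ (Metric.ball ζ r))
    (hpos : ∀ (ζ : Z) (r : ℝ), 0 < r → 0 < μ (Metric.ball ζ r))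
    (hfin : ∀ (ζ : Z) (r : ℝ), μ (Metric.ball ζ r) < ∞)
    {X : Type*} (ξ : X → Z) (lvl : X → ℤ)
    (hsep : ∀ x y : X, x ≠ y → lvl x = lvl y → (2:ℝ) ^ (-lvl x - 1) ≤ dist (ξ x) (ξ y))
    (s : ℝ) (hs : 0 < s) (p q : ℝ≥0∞)
    (hp : ENNReal.ofReal (Q / (Q + s)) < p) (hq : 0 < q)
    (Ψ : X → X) (σ : ℤ)
    (hΨ1 : ∀ x, (vBall ξ lvl (Ψ x) ∩ vBall ξ lvl x).Nonempty)
    (hΨ2 : ∀ x, |lvl (Ψ x) - lvl x| ≤ σ) :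
    ∃ Cb : ℝ≥0∞, Cb ≠ ∞ ∧ ∀ u : X → ℂ,
      seqNorm μ ξ lvl s p q (fun x => (‖u (Ψ x)‖₊ : ℝ≥0∞)) ≤
        Cb * seqNorm μ ξ lvl s p q (fun x => (‖u x‖₊ : ℝ≥0∞)) := by
  obtain ⟨M, hM, hlevel⟩ := DoublingWith.exists_levelNorm_comp_le (μ := μ) hdoub hpos hfin hsep
    (pos_of_gt hp).ne' hΨ1 hΨ2
  set F := Finset.Icc (-σ) σ
  refine ⟨2 ^ ((σ : ℝ) * s) * M * (F.card * F.card ^ (1 / q.toReal) * F.card), by finiteness,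
    fun u => ?_⟩
  set g : X → ℝ≥0∞ := fun x => ‖u x‖₊
  set c : ℤ → ℝ≥0∞ := fun k => 2 ^ ((k : ℝ) * s) * levelNorm μ ξ lvl p g k
  have hweighted : ∀ k : ℤ, 2 ^ ((k : ℝ) * s) * levelNorm μ ξ lvl p (g ∘ Ψ) k ≤
      2 ^ ((σ : ℝ) * s) * M * ∑ i ∈ F, c (k + i) := fun k =>
    calc _ ≤ 2 ^ ((k : ℝ) * s) * (M * ∑ i ∈ F, levelNorm μ ξ lvl p g (k + i)) := by
          gcongr; exact hlevel g k
      _ = M * (2 ^ ((k : ℝ) * s) * ∑ i ∈ F, levelNorm μ ξ lvl p g (k + i)) :=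
          mul_left_comm _ _ _
      _ ≤ M * (2 ^ ((σ : ℝ) * s) * ∑ i ∈ F, c (k + i)) :=
          mul_le_mul_right (two_rpow_mul_sum_Icc_le hs.le σ k _) M
      _ = _ := by ring
  calc seqNorm μ ξ lvl s p q (g ∘ Ψ)
      = sumPartG q (fun _ => 1)
          (fun k : ℤ => 2 ^ ((k : ℝ) * s) * levelNorm μ ξ lvl p (g ∘ Ψ) k) := rfl
    _ ≤ sumPartG q (fun _ => 1) (fun k => 2 ^ ((σ : ℝ) * s) * M * ∑ i ∈ F, c (k + i)) :=
        sumPartG_mono _ hweighted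
    _ = 2 ^ ((σ : ℝ) * s) * M * sumPartG q (fun _ => 1) (fun k => ∑ i ∈ F, c (k + i)) :=
        sumPartG_const_mul hq.ne' _ _ _
    _ ≤ _ := by
        rw [mul_assoc _ _ (seqNorm _ _ _ _ _ _ _)]
        gcongr
        exact sumPartG_sum_shift_le hq.ne' F c

/-- composition with a bounded-level-displacement map `Ψ` whose ball meets
the original one is bounded on `I^s_{p,q}(X)`. -/
theorem statement10 {Z : Type*} [MetricSpace Z] [MeasurableSpace Z] [BorelSpace Z]
    (μ : Measure Z) (C Q : ℝ) (hC : 1 ≤ C) (hQ : 0 < Q)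
    (hdoub : ∀ (ζ : Z) (r lam : ℝ), 0 < r → 1 ≤ lam →
      μ (Metric.ball ζ (lam * r)) ≤ ENNReal.ofReal (C * lam ^ Q) * μ (Metric.ball ζ r))
    (hpos : ∀ (ζ : Z) (r : ℝ), 0 < r → 0 < μ (Metric.ball ζ r))
    (hfin : ∀ (ζ : Z) (r : ℝ), μ (Metric.ball ζ r) < ∞)
    {X : Type*} (ξ : X → Z) (lvl : X → ℤ)
    (hsep : ∀ x y : X, x ≠ y → lvl x = lvl y → (2:ℝ) ^ (-lvl x - 1) ≤ dist (ξ x) (ξ y))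
    (hmax : ∀ (n : ℤ) (z : Z), ∃ x : X, lvl x = n ∧ dist z (ξ x) < (2:ℝ) ^ (-n - 1))
    (s : ℝ) (hs : 0 < s) (p q : ℝ≥0∞)
    (hp : ENNReal.ofReal (Q / (Q + s)) < p) (hq : 0 < q)
    (Ψ : X → X) (σ : ℤ) (hσ : 0 ≤ σ)
    (hΨ1 : ∀ x, (vBall ξ lvl (Ψ x) ∩ vBall ξ lvl x).Nonempty)
    (hΨ2 : ∀ x, |lvl (Ψ x) - lvl x| ≤ σ) :
    ∃ Cb : ℝ≥0∞, Cb ≠ ∞ ∧ ∀ u : X → ℂ,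
      seqNorm μ ξ lvl s p q (fun x => (‖u (Ψ x)‖₊ : ℝ≥0∞)) ≤
        Cb * seqNorm μ ξ lvl s p q (fun x => (‖u x‖₊ : ℝ≥0∞)) :=
  statement10_general μ C Q hdoub hpos hfin ξ lvl hsep s hs p q hp hq Ψ σ hΨ1 hΨ2
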